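/- Let ‖·‖₀, ‖·‖₁ be norms on ℂⁿ with unit balls K, T, and let C_λ(K,T) be the unit ball of the complex interpolation norm ‖·‖_λ. Then C_λ(K,T) ⊆ L_λ(K,T), i.e., the complex interpolation body is contained in the logarithmic mean of K and T. -/

import Mathlib

open MeasureTheory Set

noncomputable section

/-- A complex body in ℂⁿ ≅ ℝ^{2n}: convex, origin-symmetric, compact, nonempty
interior, and invariant under complex rotations. -/
def IsCxBody {n : ℕ} (K : Set (Fin n → ℂ)) : Prop :=
  Convex ℝ K ∧ K = -K ∧ IsCompact K ∧ (interior K).Nonempty ∧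
    ∀ φ : ℝ, (fun z : Fin n → ℂ => fun j => Complex.exp (φ * Complex.I) * z j) '' K = K

/-- The real inner product Re⟨x, θ⟩ on ℂⁿ ≅ ℝ^{2n}. -/
def crinner {n : ℕ} (x θ : Fin n → ℂ) : ℝ := (∑ j, x j * (starRingEnd ℂ) (θ j)).re

/-- Support function of a set in ℂⁿ, with respect to the real inner product. -/
def csuppFn {n : ℕ} (K : Set (Fin n → ℂ)) (θ : Fin n → ℂ) : ℝ :=
  sSup ((fun x => crinner x θ) '' K)

/-- Logarithmic mean of two bodies in ℂⁿ. -/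
def clogMean {n : ℕ} (l : ℝ) (K T : Set (Fin n → ℂ)) : Set (Fin n → ℂ) :=
  {x | ∀ θ, crinner x θ ≤ csuppFn K θ ^ (1 - l) * csuppFn T θ ^ l}
/-- `N` is a norm on ℂⁿ. -/
def IsNormC {n : ℕ} (N : (Fin n → ℂ) → ℝ) : Prop :=
  (∀ x, 0 ≤ N x) ∧ (∀ x, N x = 0 ↔ x = 0) ∧
  (∀ (a : ℂ) (x), N (a • x) = ‖a‖ * N x) ∧
  (∀ x y, N (x + y) ≤ N x + N y)

/-- Closed strip 0 ≤ Re w ≤ 1. -/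
def closedStrip : Set ℂ := {w | w.re ∈ Icc (0 : ℝ) 1}

/-- Open strip 0 < Re w < 1. -/
def openStrip : Set ℂ := {w | w.re ∈ Ioo (0 : ℝ) 1}

/-- Membership in the interpolation family 𝓕: bounded and continuous on the closed
strip, analytic on the open strip, tending to 0 at ±i∞ on both boundary lines. -/
def MemF {n : ℕ} (f : ℂ → Fin n → ℂ) : Prop :=
  ContinuousOn f closedStrip ∧ DifferentiableOn ℂ f openStrip ∧
  (∃ C, ∀ w ∈ closedStrip, ‖f w‖ ≤ C) ∧
  Filter.Tendsto (fun t : ℝ => f (t * Complex.I)) Filter.atTop (nhds 0) ∧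
  Filter.Tendsto (fun t : ℝ => f (t * Complex.I)) Filter.atBot (nhds 0) ∧
  Filter.Tendsto (fun t : ℝ => f (1 + t * Complex.I)) Filter.atTop (nhds 0) ∧
  Filter.Tendsto (fun t : ℝ => f (1 + t * Complex.I)) Filter.atBot (nhds 0)

/-- The norm on the family 𝓕. -/
def fNorm {n : ℕ} (N0 N1 : (Fin n → ℂ) → ℝ) (f : ℂ → Fin n → ℂ) : ℝ :=
  max (⨆ t : ℝ, N0 (f (t * Complex.I))) (⨆ t : ℝ, N1 (f (1 + t * Complex.I)))

/-- The complex interpolation norm. -/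
def interpNorm {n : ℕ} (N0 N1 : (Fin n → ℂ) → ℝ) (l : ℝ) (x : Fin n → ℂ) : ℝ :=
  sInf (fNorm N0 N1 '' {f | MemF f ∧ f (l : ℂ) = x})

/-- The dual norm ‖z‖* = sup_{N x ≤ 1} |⟨x, z⟩|. -/
def dualNorm {n : ℕ} (N : (Fin n → ℂ) → ℝ) (z : Fin n → ℂ) : ℝ :=
  sSup ((fun x => ‖∑ j, x j * (starRingEnd ℂ) (z j)‖) '' {x | N x ≤ 1})

/-!
Fix `θ` and `f ∈ 𝓕` with `f λ = x`. The scalar function `w ↦ ⟨f w, θ⟩` is bounded and analytic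
on the strip, and on the line `Re w = j` it is bounded by `(sup N_j ∘ f) · h_j(θ)`, because the
support function `h_j` of the unit ball of `N_j` dominates the dual norm. Hadamard's three lines
theorem then gives `Re ⟨x, θ⟩ ≤ ‖f‖_𝓕 · h_K(θ)^(1-λ) h_T(θ)^λ`, and taking the infimum over `f`
(a Gaussian multiple of `x` shows there is one) yields the claim.
-/

open Complex ComplexConjugate Filter Topology HadamardThreeLines
open scoped Pointwise

/-- `Fin n → ℂ` as a type on which a norm other than the sup norm can be installed. -/
def NormedBy (n : ℕ) : Type := Fin n → ℂ

instance {n : ℕ} : AddCommGroup (NormedBy n) := inferInstanceAs (AddCommGroup (Fin n → ℂ))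

instance {n : ℕ} : Module ℂ (NormedBy n) := inferInstanceAs (Module ℂ (Fin n → ℂ))

instance {n : ℕ} : FiniteDimensional ℂ (NormedBy n) :=
  inferInstanceAs (FiniteDimensional ℂ (Fin n → ℂ))

def toNormedBy (n : ℕ) : (Fin n → ℂ) ≃ₗ[ℂ] NormedBy n :=
  { Equiv.refl _ with map_add' := fun _ _ => rfl, map_smul' := fun _ _ => rfl }

def cpairing {n : ℕ} (θ : Fin n → ℂ) : (Fin n → ℂ) →L[ℂ] ℂ :=
  LinearMap.toContinuousLinearMap
    { toFun := fun x => ∑ j, x j * conj (θ j)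
      map_add' := fun x y => by simp only [Pi.add_apply, add_mul, Finset.sum_add_distrib]
      map_smul' := fun a x => by
        simp only [Pi.smul_apply, smul_eq_mul, RingHom.id_apply, Finset.mul_sum, mul_assoc] }

lemma crinner_eq_re_cpairing {n : ℕ} (x θ : Fin n → ℂ) : crinner x θ = (cpairing θ x).re := rfl

namespace IsNormC

variable {n : ℕ} {N : (Fin n → ℂ) → ℝ}

def toAddGroupNorm (hN : IsNormC N) : AddGroupNorm (NormedBy n) where
  toFun := N
  map_zero' := (hN.2.1 0).2 rfl
  add_le' := hN.2.2.2
  neg' x := by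
    have h := hN.2.2.1 (-1) x
    rwa [neg_one_smul ℂ (show Fin n → ℂ from x), norm_neg, norm_one, one_mul] at h
  eq_zero_of_map_eq_zero' x := (hN.2.1 x).1

theorem exists_le_mul_norm_and_norm_le_mul (hN : IsNormC N) :
    ∃ C, 0 ≤ C ∧ (∀ x, N x ≤ C * ‖x‖) ∧ ∀ x, ‖x‖ ≤ C * N x := by
  let _ : NormedAddCommGroup (NormedBy n) := hN.toAddGroupNorm.toNormedAddCommGroup
  let _ : NormedSpace ℂ (NormedBy n) := ⟨fun a x => (hN.2.2.1 a x).le⟩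
  let e := (toNormedBy n).toContinuousLinearEquiv
  refine ⟨max ‖e.toContinuousLinearMap‖ ‖e.symm.toContinuousLinearMap‖,
    le_max_of_le_left (norm_nonneg _), fun x => ?_, fun x => ?_⟩
  · exact (e.toContinuousLinearMap.le_opNorm x).trans
      (mul_le_mul_of_nonneg_right (le_max_left _ _) (norm_nonneg _))
  · exact (e.symm.toContinuousLinearMap.le_opNorm (e x)).trans
      (mul_le_mul_of_nonneg_right (le_max_right _ _) (norm_nonneg (e x)))

theorem bddAbove_crinner_unitBall (hN : IsNormC N) (θ : Fin n → ℂ) :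
    BddAbove ((fun x => crinner x θ) '' {x | N x ≤ 1}) := by
  obtain ⟨C, hC, -, hle⟩ := hN.exists_le_mul_norm_and_norm_le_mul
  refine ⟨‖cpairing θ‖ * C, ?_⟩
  rintro _ ⟨x, hx, rfl⟩
  calc crinner x θ ≤ ‖cpairing θ x‖ := crinner_eq_re_cpairing x θ ▸ re_le_norm _
    _ ≤ ‖cpairing θ‖ * ‖x‖ := (cpairing θ).le_opNorm x
    _ ≤ ‖cpairing θ‖ * C :=
      mul_le_mul_of_nonneg_left ((hle x).trans (mul_le_of_le_one_right hC hx)) (norm_nonneg _)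

theorem csuppFn_unitBall_nonneg (hN : IsNormC N) (θ : Fin n → ℂ) :
    0 ≤ csuppFn {x | N x ≤ 1} θ := by
  refine le_csSup (hN.bddAbove_crinner_unitBall θ) ⟨0, ?_, ?_⟩
  · simp [(hN.2.1 0).2 rfl]
  · simp [crinner_eq_re_cpairing]

theorem norm_cpairing_le (hN : IsNormC N) (θ y : Fin n → ℂ) :
    ‖cpairing θ y‖ ≤ N y * csuppFn {x | N x ≤ 1} θ := by
  rcases (hN.1 y).eq_or_lt with hy | hy
  · rw [← hy, (hN.2.1 y).1 hy.symm, map_zero, norm_zero, zero_mul]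
  obtain ⟨c, hc, hcy⟩ := exists_norm_eq_mul_self (cpairing θ y)
  have hball : N ((c / N y) • y) ≤ 1 := by
    rw [hN.2.2.1, norm_div, hc, norm_real, Real.norm_of_nonneg hy.le, one_div_mul_cancel hy.ne']
  have hval : crinner ((c / N y) • y) θ = ‖cpairing θ y‖ / N y := by
    rw [crinner_eq_re_cpairing, map_smul, smul_eq_mul, div_mul_eq_mul_div, ← hcy,
      ← ofReal_div, ofReal_re]
  rw [← div_le_iff₀' hy, ← hval]
  exact le_csSup (hN.bddAbove_crinner_unitBall θ) ⟨_, hball, rfl⟩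

end IsNormC

lemma tendsto_exp_one_sub_sq_cocompact :
    Tendsto (fun t : ℝ => Real.exp (1 - t ^ 2)) (cocompact ℝ) (𝓝 0) := by
  have hsq : Tendsto (fun t : ℝ => t ^ 2) (cocompact ℝ) atTop := by
    simpa only [Function.comp_def, Real.norm_eq_abs, sq_abs] using
      (tendsto_pow_atTop two_ne_zero).comp (tendsto_norm_cocompact_atTop (E := ℝ))
  exact Real.tendsto_exp_atBot.comp (tendsto_atBot_add_const_left _ 1 (tendsto_neg_atTop_atBot.comp hsq))

lemma norm_cexp_sub_sq_le {l : ℝ} (hl : l ∈ Icc (0 : ℝ) 1) {w : ℂ} (hw : w ∈ closedStrip) :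
    ‖cexp ((w - l) ^ 2)‖ ≤ Real.exp (1 - w.im ^ 2) := by
  obtain ⟨hw0, hw1⟩ := hw
  rw [norm_exp, Real.exp_le_exp]
  simp only [sq, mul_re, sub_re, sub_im, ofReal_re, ofReal_im, sub_zero]
  nlinarith [hl.1, hl.2]

theorem memF_cexp_sub_sq_smul {n : ℕ} {l : ℝ} (hl : l ∈ Icc (0 : ℝ) 1) (x : Fin n → ℂ) :
    MemF (fun w => cexp ((w - l) ^ 2) • x) := by
  have hdiff : Differentiable ℂ (fun w : ℂ => cexp ((w - l) ^ 2) • x) :=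
    (((differentiable_id.sub_const _).pow 2).cexp).smul_const x
  have hline : ∀ c ∈ Icc (0 : ℝ) 1,
      Tendsto (fun t : ℝ => cexp ((c + t * I - l) ^ 2) • x) (cocompact ℝ) (𝓝 0) := by
    intro c hc
    refine squeeze_zero_norm (fun t => ?_)
      (by simpa using tendsto_exp_one_sub_sq_cocompact.mul_const ‖x‖)
    rw [norm_smul]
    refine mul_le_mul_of_nonneg_right ?_ (norm_nonneg x)
    simpa using norm_cexp_sub_sq_le hl (w := c + t * I) (by simpa [closedStrip] using hc)
  have h0 := hline 0 ⟨le_rfl, zero_le_one⟩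
  have h1 := hline 1 ⟨zero_le_one, le_rfl⟩
  simp only [ofReal_zero, zero_add, ofReal_one] at h0 h1
  refine ⟨hdiff.continuous.continuousOn, hdiff.differentiableOn, ⟨Real.exp 1 * ‖x‖, fun w hw => ?_⟩,
    h0.mono_left atTop_le_cocompact, h0.mono_left atBot_le_cocompact,
    h1.mono_left atTop_le_cocompact, h1.mono_left atBot_le_cocompact⟩
  rw [norm_smul]
  refine mul_le_mul_of_nonneg_right ((norm_cexp_sub_sq_le hl hw).trans ?_) (norm_nonneg x)
  exact Real.exp_le_exp.2 (by nlinarith [sq_nonneg w.im])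

lemma rpow_mul_rpow_le_max_mul {a b A B l : ℝ} (ha : 0 ≤ a) (hb : 0 ≤ b) (hA : 0 ≤ A)
    (hB : 0 ≤ B) (hl : l ∈ Icc (0 : ℝ) 1) :
    (a * A) ^ (1 - l) * (b * B) ^ l ≤ max a b * (A ^ (1 - l) * B ^ l) := by
  have hm : 0 ≤ max a b := le_max_of_le_left ha
  calc (a * A) ^ (1 - l) * (b * B) ^ l
      ≤ (max a b * A) ^ (1 - l) * (max a b * B) ^ l := by
        gcongr
        · linarith [hl.2]
        · exact le_max_left a b
        · exact hl.1
        · exact le_max_right a b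
    _ = max a b ^ ((1 - l) + l) * (A ^ (1 - l) * B ^ l) := by
        rw [Real.mul_rpow hm hA, Real.mul_rpow hm hB, Real.rpow_add' hm (by norm_num)]
        ring
    _ = max a b * (A ^ (1 - l) * B ^ l) := by norm_num

namespace MemF

variable {n : ℕ} {f : ℂ → Fin n → ℂ}

theorem bddAbove_image (hf : MemF f) {N : (Fin n → ℂ) → ℝ} (hN : IsNormC N) :
    BddAbove ((N ∘ f) '' closedStrip) := by
  obtain ⟨-, -, ⟨B, hB⟩, -⟩ := hf
  obtain ⟨C, hC, hle, -⟩ := hN.exists_le_mul_norm_and_norm_le_mul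
  exact ⟨C * B, by rintro _ ⟨w, hw, rfl⟩; exact (hle _).trans (mul_le_mul_of_nonneg_left (hB w hw) hC)⟩

/-- Hadamard's three lines theorem for the scalar function `⟨f ·, θ⟩`. -/
theorem crinner_le {N0 N1 : (Fin n → ℂ) → ℝ} (hN0 : IsNormC N0) (hN1 : IsNormC N1)
    {l : ℝ} (hl : l ∈ Icc (0 : ℝ) 1) (hf : MemF f) (θ : Fin n → ℂ) :
    crinner (f l) θ ≤
      ((⨆ t : ℝ, N0 (f (t * I))) * csuppFn {x | N0 x ≤ 1} θ) ^ (1 - l) *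
      ((⨆ t : ℝ, N1 (f (1 + t * I))) * csuppFn {x | N1 x ≤ 1} θ) ^ l := by
  set g : ℂ → ℂ := fun w => cpairing θ (f w)
  have hclosure : closure (verticalStrip 0 1) = verticalClosedStrip 0 1 := by
    rw [verticalClosedStrip, ← closure_Ioo zero_ne_one, ← closure_preimage_re]
    rfl
  have hd : DiffContOnCl ℂ g (verticalStrip 0 1) :=
    ⟨(cpairing θ).differentiable.comp_differentiableOn hf.2.1,
      hclosure ▸ (cpairing θ).continuous.comp_continuousOn hf.1⟩
  have hB : BddAbove ((norm ∘ g) '' verticalClosedStrip 0 1) := by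
    obtain ⟨C, hC⟩ := hf.2.2.1
    exact ⟨‖cpairing θ‖ * C, by
      rintro _ ⟨w, hw, rfl⟩
      exact ((cpairing θ).le_opNorm _).trans (mul_le_mul_of_nonneg_left (hC w hw) (norm_nonneg _))⟩
  have h0 : ∀ z ∈ re ⁻¹' {0}, ‖g z‖ ≤
      (⨆ t : ℝ, N0 (f (t * I))) * csuppFn {x | N0 x ≤ 1} θ := by
    intro z hz
    have hz : z = z.im * I := ext (by simpa using hz) (by simp)
    refine (hN0.norm_cpairing_le θ _).trans
      (mul_le_mul_of_nonneg_right ?_ (hN0.csuppFn_unitBall_nonneg θ))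
    rw [hz]
    exact le_ciSup ((hf.bddAbove_image hN0).mono (by
      rintro _ ⟨t, rfl⟩; exact ⟨t * I, by simp [closedStrip], rfl⟩)) z.im
  have h1 : ∀ z ∈ re ⁻¹' {1}, ‖g z‖ ≤
      (⨆ t : ℝ, N1 (f (1 + t * I))) * csuppFn {x | N1 x ≤ 1} θ := by
    intro z hz
    have hz : z = 1 + z.im * I := ext (by simpa using hz) (by simp)
    refine (hN1.norm_cpairing_le θ _).trans
      (mul_le_mul_of_nonneg_right ?_ (hN1.csuppFn_unitBall_nonneg θ))
    rw [hz]
    exact le_ciSup ((hf.bddAbove_image hN1).mono (by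
      rintro _ ⟨t, rfl⟩; exact ⟨1 + t * I, by simp [closedStrip], rfl⟩)) z.im
  have hl' : (l : ℂ) ∈ verticalClosedStrip 0 1 := by simpa [verticalClosedStrip] using hl
  simpa [crinner_eq_re_cpairing, g] using (re_le_norm _).trans (norm_le_interp_of_mem_verticalClosedStrip₀₁' g hl' hd hB h0 h1)

theorem crinner_le_fNorm_mul {N0 N1 : (Fin n → ℂ) → ℝ} (hN0 : IsNormC N0) (hN1 : IsNormC N1)
    {l : ℝ} (hl : l ∈ Icc (0 : ℝ) 1) (hf : MemF f) (θ : Fin n → ℂ) :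
    crinner (f l) θ ≤
      fNorm N0 N1 f * (csuppFn {x | N0 x ≤ 1} θ ^ (1 - l) * csuppFn {x | N1 x ≤ 1} θ ^ l) :=
  (hf.crinner_le hN0 hN1 hl θ).trans <| rpow_mul_rpow_le_max_mul
    (Real.iSup_nonneg fun _ => hN0.1 _) (Real.iSup_nonneg fun _ => hN1.1 _)
    (hN0.csuppFn_unitBall_nonneg θ) (hN1.csuppFn_unitBall_nonneg θ) hl

end MemF

/-- The complex interpolation body is contained in the logarithmic mean. -/
theorem stmt_8 {n : ℕ} (N0 N1 : (Fin n → ℂ) → ℝ) (hN0 : IsNormC N0) (hN1 : IsNormC N1)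
    (l : ℝ) (hl : l ∈ Icc (0 : ℝ) 1) :
    {x | interpNorm N0 N1 l x ≤ 1} ⊆ clogMean l {x | N0 x ≤ 1} {x | N1 x ≤ 1} := by
  intro x hx θ
  set P := csuppFn {x | N0 x ≤ 1} θ ^ (1 - l) * csuppFn {x | N1 x ≤ 1} θ ^ l
  have hP : 0 ≤ P := mul_nonneg (Real.rpow_nonneg (hN0.csuppFn_unitBall_nonneg θ) _)
    (Real.rpow_nonneg (hN1.csuppFn_unitBall_nonneg θ) _)
  -- `sInf ∅ = 0`, so without an admissible `f` every `x` would lie in the body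
  have hne : (fNorm N0 N1 '' {f | MemF f ∧ f (l : ℂ) = x}).Nonempty :=
    ⟨_, _, ⟨memF_cexp_sub_sq_smul hl x, by simp⟩, rfl⟩
  calc crinner x θ ≤ sInf (P • fNorm N0 N1 '' {f | MemF f ∧ f (l : ℂ) = x}) := by
        refine le_csInf hne.smul_set ?_
        rintro _ ⟨_, ⟨f, ⟨hf, rfl⟩, rfl⟩, rfl⟩
        dsimp only
        rw [smul_eq_mul, mul_comm]
        exact hf.crinner_le_fNorm_mul hN0 hN1 hl θ
    _ = P * interpNorm N0 N1 l x := Real.sInf_smul_of_nonneg hP _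
    _ ≤ P := mul_le_of_le_one_right hP hx
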